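/- Take 𝒢 = ℤ and let c, m be positive integers. The number of k-skeletal area vectors (equivalently, k-skeletal paths) equals the m-ballot number c/((m+1)n + c) · binom((m+1)n + c, n), for every k ∈ {0, 1, …, n−1}. -/

import Mathlib

/-- Integer area vector. -/
def IsAreaVecZ {n : ℕ} (m : ℤ) (g : Fin (n + 1) → ℤ) : Prop :=
  ∀ i : Fin n, g i.succ ≤ g i.castSucc + m

/-- Integer `k`-skeletal area vector. -/
def IsSkeletalZ {n : ℕ} (c m : ℤ) (k : ℕ) (g : Fin (n + 1) → ℤ) : Prop :=
  IsAreaVecZ m g ∧ g 0 ≤ c ∧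
  (∀ i : Fin (n + 1), n - k ≤ (i : ℕ) → 0 < g i) ∧
  ¬ ∃ s : ℕ, s + k ≤ n ∧ ∀ j : Fin (n + 1), s ≤ (j : ℕ) → (j : ℕ) ≤ s + k → c < g j

/-!
Cycle-lemma double counting. Extend a vector `g` quasi-periodically to `G : ℤ → ℤ`,
`G (j + n + 1) = G j - c`. If `g` is admissible (an area vector with `g 0 ≤ c` and
`-m ≤ g n`), then `G` is again a path with steps `≤ m`, and cutting it at a position
`p ∈ [0, n]` and a level `v` gives the vector `i ↦ G (i + p) - v`. Exactly
`(m + 1)(n + 1) + c` of these cuts are admissible (a telescoping sum), and exactly `c` are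
`k`-skeletal: the cut at `(p, v)` is skeletal iff `p - k - 1` is the last start of a run of
`k + 1` values above `v + c`, so `v` determines `p`, and raising `v` by `c` moves `p` back by a
period. Cutting can be undone by another cut, so counting pairs (vector, cut) in both
directions gives `#skeletal · ((m + 1)(n + 1) + c) = #admissible · c`. The admissible vectors
correspond to the strictly increasing sequences `c - g i + (m + 1) i` in
`[0, (m + 1)(n + 1) + c)`, so there are `binom((m + 1)(n + 1) + c, n + 1)` of them.
-/

namespace SkeletalCount

def QuasiPeriodic (G : ℤ → ℤ) (a b : ℤ) : Prop := ∀ j, G (j + a) = G j - b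

namespace QuasiPeriodic

variable {G : ℤ → ℤ} {a b : ℤ}

theorem add_mul (hG : QuasiPeriodic G a b) (j t : ℤ) : G (j + t * a) = G j - t * b := by
  induction t using Int.induction_on with
  | zero => simp
  | succ t ih => rw [show j + (t + 1) * a = j + t * a + a by ring, hG, ih]; ring
  | pred t ih =>
    have h := hG (j + (-t - 1) * a)
    rw [show j + (-t - 1) * a + a = j + -t * a by ring, ih] at h
    linarith

theorem eq_emod (hG : QuasiPeriodic G a b) (j : ℤ) : G j = G (j % a) - j / a * b := by
  conv_lhs => rw [← Int.emod_add_ediv_mul j a]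
  exact hG.add_mul _ _

/-- `a * G j + b * j` is `a`-periodic, hence takes finitely many values. -/
theorem exists_bounds (hG : QuasiPeriodic G a b) (ha : 0 < a) :
    ∃ L U, ∀ j, L ≤ a * G j + b * j ∧ a * G j + b * j ≤ U := by
  set H := fun j => a * G j + b * j
  have hfin := (Set.finite_Ico 0 a).image H
  obtain ⟨L, hL⟩ := hfin.bddBelow
  obtain ⟨U, hU⟩ := hfin.bddAbove
  have hH : ∀ j, H j ∈ H '' Set.Ico 0 a := fun j =>
    ⟨j % a, ⟨Int.emod_nonneg _ ha.ne', Int.emod_lt_of_pos _ ha⟩, by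
      simp only [H]
      rw [hG.eq_emod j]
      linear_combination b * Int.emod_add_ediv_mul j a⟩
  exact ⟨L, U, fun j => ⟨hL (hH j), hU (hH j)⟩⟩

theorem exists_forall_le_lt (hG : QuasiPeriodic G a b) (ha : 0 < a) (hb : 0 < b) (w : ℤ) :
    ∃ j₀, ∀ j ≤ j₀, w < G j := by
  obtain ⟨L, _, hLU⟩ := hG.exists_bounds ha
  refine ⟨min 0 (L - a * w - 1), fun j hj => ?_⟩
  have hL := (hLU j).1
  have hj0 : j ≤ 0 := hj.trans (min_le_left _ _)
  have hj1 : j ≤ L - a * w - 1 := hj.trans (min_le_right _ _)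
  have : a * w < a * G j := by nlinarith
  exact lt_of_mul_lt_mul_left this ha.le

theorem bddAbove_setOf_lt (hG : QuasiPeriodic G a b) (ha : 0 < a) (hb : 0 < b) (w : ℤ) :
    BddAbove {j | w < G j} := by
  obtain ⟨_, U, hLU⟩ := hG.exists_bounds ha
  refine ⟨max 0 (U - a * w), fun j (hj : w < G j) => ?_⟩
  have hU := (hLU j).2
  by_contra! h
  have h0 : 0 < j := (le_max_left _ _).trans_lt h
  have h1 : U - a * w < j := (le_max_right _ _).trans_lt h
  nlinarith

theorem step_le (hG : QuasiPeriodic G a b) (ha : 0 < a) {m : ℤ}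
    (h : ∀ r, 0 ≤ r → r < a → G (r + 1) ≤ G r + m) (j : ℤ) : G (j + 1) ≤ G j + m := by
  have h1 := hG.add_mul (j % a + 1) (j / a)
  have h2 := hG.add_mul (j % a) (j / a)
  rw [add_right_comm, Int.emod_add_ediv_mul] at h1
  rw [Int.emod_add_ediv_mul] at h2
  have := h (j % a) (Int.emod_nonneg _ ha.ne') (Int.emod_lt_of_pos _ ha)
  linarith

end QuasiPeriodic

theorem ncard_setOf_mem_fiber {α β : Type*} {A : Set α} {F : α → Set β} (hA : A.Finite)
    (hF : ∀ a ∈ A, (F a).Finite) :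
    {x : α × β | x.1 ∈ A ∧ x.2 ∈ F x.1}.ncard = ∑ᶠ a ∈ A, (F a).ncard := by
  have : {x : α × β | x.1 ∈ A ∧ x.2 ∈ F x.1} = ⋃ a ∈ A, Prod.mk a '' F a := by
    ext ⟨a, b⟩
    simp [and_comm]
  rw [this, hA.ncard_biUnion (fun a ha => (hF a ha).image _)]
  · exact finsum_mem_congr rfl fun a _ => (Prod.mk_right_injective a).injOn.ncard_image
  · intro a _ a' _ h
    simp only [Function.onFun, Set.disjoint_left]
    rintro _ ⟨b, -, rfl⟩ ⟨b', -, h'⟩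
    exact h (congrArg Prod.fst h').symm

theorem ncard_setOf_mem_fiber_of_ncard_eq {α β : Type*} {A : Set α} {F : α → Set β} {r : ℕ}
    (hA : A.Finite) (hr : 0 < r) (hF : ∀ a ∈ A, (F a).ncard = r) :
    {x : α × β | x.1 ∈ A ∧ x.2 ∈ F x.1}.ncard = A.ncard * r := by
  rw [ncard_setOf_mem_fiber hA fun a ha => Set.finite_of_ncard_pos (hF a ha ▸ hr),
    finsum_mem_congr rfl hF, finsum_mem_eq_finite_toFinset_sum _ hA, Finset.sum_const,
    smul_eq_mul, Set.ncard_eq_toFinset_card A hA]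

theorem ncard_setOf_strictMono_mem {α : Type*} [LinearOrder α] (S : Finset α) (k : ℕ) :
    {f : Fin k → α | StrictMono f ∧ ∀ i, f i ∈ S}.ncard = S.card.choose k := by
  have hmem (f : Fin k → α) (i : Fin k) : f i ∈ Finset.univ.image f :=
    Finset.mem_image_of_mem f (Finset.mem_univ i)
  have hcard {f : Fin k → α} (hf : StrictMono f) : (Finset.univ.image f).card = k := by
    rw [Finset.card_image_of_injective _ hf.injective, Finset.card_fin]
  have hinj : Set.InjOn (fun f : Fin k → α => Finset.univ.image f)
      {f | StrictMono f ∧ ∀ i, f i ∈ S} := by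
    rintro f ⟨hf, -⟩ f' ⟨hf', -⟩ (h : Finset.univ.image f = Finset.univ.image f')
    rw [Finset.orderEmbOfFin_unique (hcard hf') (fun i => h ▸ hmem f i) hf,
      ← Finset.orderEmbOfFin_unique (hcard hf') (hmem f') hf']
  have himage : (fun f : Fin k → α => Finset.univ.image f) ''
      {f | StrictMono f ∧ ∀ i, f i ∈ S} = S.powersetCard k := by
    ext s
    simp only [Set.mem_image, Finset.mem_coe, Finset.mem_powersetCard]
    constructor
    · rintro ⟨f, ⟨hf, hS⟩, rfl⟩
      refine ⟨fun x hx => ?_, hcard hf⟩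
      obtain ⟨i, -, rfl⟩ := Finset.mem_image.1 hx
      exact hS i
    · rintro ⟨hsS, hs⟩
      exact ⟨s.orderEmbOfFin hs, ⟨(s.orderEmbOfFin hs).strictMono,
        fun i => hsS (s.orderEmbOfFin_mem hs i)⟩, s.image_orderEmbOfFin_univ hs⟩
  rw [← hinj.ncard_image, himage, Set.ncard_coe_finset, Finset.card_powersetCard]

variable {n : ℕ}

theorem QuasiPeriodic.sum_range_sub {G : ℤ → ℤ} {c : ℕ} (hG : QuasiPeriodic G (n + 1) c) :
    ∑ p ∈ Finset.range (n + 1), (G (n + p) - G p) = -(n * c) := by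
  have hshift (p : ℕ) : G (n + p) - G p = G ((p : ℤ) - 1) - G p - c := by
    rw [← sub_right_comm, ← hG, show (p : ℤ) - 1 + (n + 1) = n + p by ring]
  have htel := Finset.sum_range_sub' (fun p : ℕ => G ((p : ℤ) - 1)) (n + 1)
  simp only [Nat.cast_add, Nat.cast_one, add_sub_cancel_right, Nat.cast_zero, zero_sub] at htel
  have := hG (-1)
  rw [show (-1 : ℤ) + (n + 1) = n by ring] at this
  simp only [hshift, Finset.sum_sub_distrib, htel, Finset.sum_const, Finset.card_range,
    nsmul_eq_mul]
  push_cast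
  linear_combination -1 * this

theorem ncard_setOf_eq_of_quasiPeriodic {c : ℕ} (hc : 0 < c) {f : ℤ → ℤ}
    (hf : QuasiPeriodic f c (n + 1)) :
    {q : Fin (n + 1) × ℤ | (q.1 : ℤ) = f q.2}.ncard = c := by
  have hN : (0 : ℤ) < n + 1 := by positivity
  have hc' : (0 : ℤ) < c := by exact_mod_cast hc
  -- Every residue class of levels mod `c` meets the graph of `f` over `[0, n]` exactly once.
  have hinj : Set.InjOn (fun q : Fin (n + 1) × ℤ => q.2 % c)
      {q : Fin (n + 1) × ℤ | (q.1 : ℤ) = f q.2} := by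
    rintro ⟨p, v⟩ (hp : (p : ℤ) = f v) ⟨p', v'⟩ (hp' : (p' : ℤ) = f v')
      (h : v % c = v' % c)
    obtain ⟨t, ht⟩ := (Int.ModEq.dvd h : (c : ℤ) ∣ v' - v)
    have hv' : v' = v + t * c := by linarith
    have hft := hf.add_mul v t
    rw [← hv', ← hp, ← hp'] at hft
    have hp1 : ((p : ℕ) : ℤ) < n + 1 := by exact_mod_cast p.2
    have hp1' : ((p' : ℕ) : ℤ) < n + 1 := by exact_mod_cast p'.2
    obtain rfl : t = 0 := by
      rcases lt_trichotomy t 0 with ht | ht | ht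
      · nlinarith
      · exact ht
      · nlinarith
    simp only [zero_mul, add_zero, sub_zero, Nat.cast_inj, Fin.val_inj] at hv' hft
    rw [hv', hft]
  have himage : (fun q : Fin (n + 1) × ℤ => q.2 % c) ''
      {q : Fin (n + 1) × ℤ | (q.1 : ℤ) = f q.2} = Set.Ico 0 (c : ℤ) := by
    refine Set.Subset.antisymm ?_ fun r ⟨hr0, hr1⟩ => ?_
    · rintro _ ⟨q, -, rfl⟩
      exact ⟨Int.emod_nonneg _ hc'.ne', Int.emod_lt_of_pos _ hc'⟩
    have hfv := hf.add_mul r (f r / (n + 1))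
    have h0 := Int.emod_nonneg (f r) hN.ne'
    have h1 := Int.emod_lt_of_pos (f r) hN
    have := Int.emod_add_ediv_mul (f r) (n + 1)
    refine ⟨(⟨(f (r + f r / (n + 1) * c)).toNat, by omega⟩, r + f r / (n + 1) * c),
      show _ = _ by simp only; omega, ?_⟩
    simp only [Int.add_mul_emod_self_right, Int.emod_eq_of_lt hr0 hr1]
  rw [← hinj.ncard_image, himage, ← Finset.coe_Ico, Set.ncard_coe_finset,
    Int.card_Ico, sub_zero, Int.toNat_natCast]

def extend (c : ℕ) (g : Fin (n + 1) → ℤ) (j : ℤ) : ℤ :=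
  g ⟨(j % (n + 1)).toNat, by
    have := Int.emod_nonneg j (by positivity : (n : ℤ) + 1 ≠ 0)
    have := Int.emod_lt_of_pos j (by positivity : (0 : ℤ) < n + 1)
    omega⟩ - j / (n + 1) * c

theorem extend_coe (c : ℕ) (g : Fin (n + 1) → ℤ) (i : Fin (n + 1)) : extend c g i = g i := by
  have h1 : ((i : ℕ) : ℤ) < n + 1 := by exact_mod_cast i.2
  simp [extend, Int.emod_eq_of_lt (by positivity) h1, Int.ediv_eq_zero_of_lt (by positivity) h1]

theorem quasiPeriodic_extend (c : ℕ) (g : Fin (n + 1) → ℤ) :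
    QuasiPeriodic (extend c g) (n + 1) c := by
  intro j
  have hN : (n : ℤ) + 1 ≠ 0 := by positivity
  simp only [extend, Int.add_emod_right, Int.add_ediv_of_dvd_right (dvd_refl _), Int.ediv_self hN]
  ring

theorem extend_step {c m : ℕ} {g : Fin (n + 1) → ℤ} (hg : IsAreaVecZ m g)
    (hwrap : g 0 ≤ g (Fin.last n) + m + c) (j : ℤ) :
    extend c g (j + 1) ≤ extend c g j + m := by
  refine (quasiPeriodic_extend c g).step_le (by positivity) (fun r h0 h1 => ?_) j
  lift r to ℕ using h0
  rcases Nat.lt_or_ge r n with hr | hr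
  · have := hg ⟨r, hr⟩
    rw [← extend_coe c g, ← extend_coe c g] at this
    simpa using this
  · obtain rfl : n = r := by omega
    have hN := quasiPeriodic_extend c g 0
    have h0 := extend_coe c g 0
    have hn := extend_coe c g (Fin.last n)
    simp only [Fin.val_zero, Fin.val_last, Nat.cast_zero, zero_add] at hN h0 hn
    linarith

def cut (G : ℤ → ℤ) (p : Fin (n + 1)) (v : ℤ) : Fin (n + 1) → ℤ :=
  fun i => G (i + p) - v

theorem extend_cut {G : ℤ → ℤ} {c : ℕ} (hG : QuasiPeriodic G (n + 1) c) (p : Fin (n + 1))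
    (v j : ℤ) : extend c (cut G p v) j = G (j + p) - v := by
  have h := hG.add_mul (j % (n + 1) + p) (j / (n + 1))
  rw [add_right_comm, Int.emod_add_ediv_mul] at h
  have h0 := Int.emod_nonneg j (by positivity : (n : ℤ) + 1 ≠ 0)
  simp only [extend, cut, Int.toNat_of_nonneg h0]
  linarith

theorem isAreaVec_cut {G : ℤ → ℤ} {m : ℕ} (hstep : ∀ j, G (j + 1) ≤ G j + m)
    (p : Fin (n + 1)) (v : ℤ) : IsAreaVecZ m (cut G p v) := by
  intro i
  have := hstep (i + p)
  simp only [cut, Fin.val_succ, Fin.val_castSucc]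
  push_cast
  rw [add_right_comm]
  linarith

def Admissible (c m : ℕ) (g : Fin (n + 1) → ℤ) : Prop :=
  IsAreaVecZ m g ∧ g 0 ≤ c ∧ -(m : ℤ) ≤ g (Fin.last n)

theorem IsSkeletalZ.admissible {c m k : ℕ} {g : Fin (n + 1) → ℤ}
    (hg : IsSkeletalZ c m k g) : Admissible c m g :=
  ⟨hg.1, hg.2.1, by have := hg.2.2.1 (Fin.last n) (by simp); omega⟩

theorem cut_admissible_iff {G : ℤ → ℤ} {c m : ℕ} (hstep : ∀ j, G (j + 1) ≤ G j + m)
    (p : Fin (n + 1)) (v : ℤ) :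
    Admissible c m (cut G p v) ↔ v ∈ Set.Icc (G p - c) (G (n + p) + m) := by
  simp only [Admissible, isAreaVec_cut hstep, cut, true_and, Set.mem_Icc, Fin.val_zero,
    Fin.val_last, Nat.cast_zero, zero_add]
  constructor <;> rintro ⟨h1, h2⟩ <;> constructor <;> linarith

theorem Admissible.extend_step {c m : ℕ} {g : Fin (n + 1) → ℤ} (hg : Admissible c m g)
    (j : ℤ) :
    extend c g (j + 1) ≤ extend c g j + m :=
  SkeletalCount.extend_step hg.1 (by linarith [hg.2.1, hg.2.2]) j

theorem ncard_setOf_admissible (c m : ℕ) :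
    {g : Fin (n + 1) → ℤ | Admissible c m g}.ncard =
      ((m + 1) * (n + 1) + c).choose (n + 1) := by
  set b : (Fin (n + 1) → ℤ) → Fin (n + 1) → ℤ := fun g i => c - g i + (m + 1) * i
  have hb : Function.Injective b := fun g g' h => funext fun i => by
    have := congrFun h i
    simp only [b] at this
    linarith
  have hrange : ∀ f, f ∈ Set.range b := fun f =>
    ⟨fun i => c - f i + (m + 1) * i, funext fun i => by simp only [b]; ring⟩
  have harea : ∀ g, IsAreaVecZ m g ↔ StrictMono (b g) := fun g => by
    rw [Fin.strictMono_iff_lt_succ]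
    refine forall_congr' fun i => ?_
    simp only [b, Fin.val_succ, Fin.val_castSucc]
    push_cast
    constructor <;> intro h <;> linarith
  have hset : {g : Fin (n + 1) → ℤ | Admissible c m g} = b ⁻¹'
      {f | StrictMono f ∧ ∀ i, f i ∈ Finset.Ico (0 : ℤ) ((m + 1) * (n + 1) + c)} := by
    ext g
    simp only [Set.mem_ofPred_eq, Set.mem_preimage, Admissible, harea, Finset.mem_Ico]
    constructor
    · rintro ⟨hmono, h0, hlast⟩
      refine ⟨hmono, fun i => ⟨le_trans ?_ (hmono.monotone (Fin.zero_le i)),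
        (hmono.monotone (Fin.le_last i)).trans_lt ?_⟩⟩ <;> simp [b] <;> linarith
    · rintro ⟨hmono, hI⟩
      have h0 := (hI 0).1
      have hlast := (hI (Fin.last n)).2
      simp only [b, Fin.val_zero, Fin.val_last] at h0 hlast
      refine ⟨hmono, ?_, ?_⟩ <;> push_cast at h0 hlast <;> linarith
  rw [hset, Set.ncard_preimage_of_injective_subset_range hb fun f _ => hrange f,
    ncard_setOf_strictMono_mem, Int.card_Ico, sub_zero]
  norm_cast

theorem ncard_setOf_admissible_cut {G : ℤ → ℤ} {c m : ℕ} (hG : QuasiPeriodic G (n + 1) c)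
    (hstep : ∀ j, G (j + 1) ≤ G j + m) :
    {q : Fin (n + 1) × ℤ | Admissible c m (cut G q.1 q.2)}.ncard = (m + 1) * (n + 1) + c := by
  have hset : {q : Fin (n + 1) × ℤ | Admissible c m (cut G q.1 q.2)} =
      {q | q.1 ∈ Set.univ ∧ q.2 ∈ Set.Icc (G q.1 - c) (G (n + q.1) + m)} := by
    ext ⟨p, v⟩
    simp [cut_admissible_iff hstep]
  have hlen (p : ℕ) : 0 ≤ G (n + p) + m + 1 - (G p - c) := by
    have := hG p
    have := hstep (n + p)
    rw [show (n : ℤ) + p + 1 = p + (n + 1) by ring] at *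
    linarith
  rw [hset, ncard_setOf_mem_fiber (F := fun p : Fin (n + 1) => Set.Icc (G p - c) (G (n + p) + m))
    Set.finite_univ fun _ _ => Set.finite_Icc _ _, finsum_mem_univ, finsum_eq_sum_of_fintype]
  simp only [← Finset.coe_Icc, Set.ncard_coe_finset, Int.card_Icc]
  rw [Fin.sum_univ_eq_sum_range (fun p => (G (n + p) + m + 1 - (G p - c)).toNat)]
  zify
  rw [Finset.sum_congr rfl fun p _ => Int.toNat_of_nonneg (hlen p)]
  have := hG.sum_range_sub
  simp only [show ∀ p : ℕ, G (n + p) + m + 1 - (G p - c) = G (n + p) - G p + (m + 1 + c) by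
    intro p; ring, Finset.sum_add_distrib, this, Finset.sum_const, Finset.card_range]
  ring

def runStarts (G : ℤ → ℤ) (k : ℕ) (w : ℤ) : Set ℤ :=
  {j | ∀ i : ℕ, i ≤ k → w < G (j + i)}

namespace QuasiPeriodic

variable {G : ℤ → ℤ} {c k : ℕ} (hG : QuasiPeriodic G (n + 1) c)
include hG

theorem mem_runStarts_add_iff (w j : ℤ) :
    j + (n + 1) ∈ runStarts G k w ↔ j ∈ runStarts G k (w + c) := by
  refine forall₂_congr fun i _ => ?_
  rw [add_right_comm, hG]
  constructor <;> intro h <;> linarith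

theorem sub_mul_mem_runStarts {w j : ℤ} (hj : j ∈ runStarts G k w) {t : ℤ} (ht : 0 ≤ t) :
    j - t * (n + 1) ∈ runStarts G k w := fun i hi => by
  have := hG.add_mul (j + i) (-t)
  rw [show j + i + -t * (n + 1) = j - t * (n + 1) + i by ring] at this
  nlinarith [hj i hi]

theorem exists_mem_runStarts_Ico {w j x : ℤ} (hj : j ∈ runStarts G k w) (hx : x ≤ j) :
    ∃ j' ∈ runStarts G k w, x ≤ j' ∧ j' < x + (n + 1) := by
  have hN : (0 : ℤ) < n + 1 := by positivity
  refine ⟨j - (j - x) / (n + 1) * (n + 1),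
    hG.sub_mul_mem_runStarts hj (Int.ediv_nonneg (by linarith) hN.le), ?_⟩
  have h0 := Int.emod_nonneg (j - x) hN.ne'
  have h1 := Int.emod_lt_of_pos (j - x) hN
  have := Int.emod_add_ediv_mul (j - x) (n + 1)
  constructor <;> linarith

theorem isGreatest_sSup_runStarts (hc : 0 < c) (w : ℤ) :
    IsGreatest (runStarts G k w) (sSup (runStarts G k w)) := by
  have hN : (0 : ℤ) < n + 1 := by positivity
  have hbdd : BddAbove (runStarts G k w) :=
    (hG.bddAbove_setOf_lt hN (by exact_mod_cast hc) w).mono fun j hj => by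
      simpa using hj 0 (Nat.zero_le _)
  obtain ⟨j₀, hj₀⟩ := hG.exists_forall_le_lt hN (by exact_mod_cast hc) w
  have hne : (runStarts G k w).Nonempty := ⟨j₀ - k, fun i hi => hj₀ _ (by omega)⟩
  exact ⟨Int.csSup_mem hne hbdd, fun j hj => le_csSup hbdd hj⟩

end QuasiPeriodic

section skeletal

variable {G : ℤ → ℤ} {c m k : ℕ}

theorem isGreatest_runStarts_of_isSkeletalZ_cut (hk : k ≤ n) (hG : QuasiPeriodic G (n + 1) c)
    {p : Fin (n + 1)} {v : ℤ} (h : IsSkeletalZ c m k (cut G p v)) :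
    IsGreatest (runStarts G k (v + c)) (p - k - 1) := by
  obtain ⟨-, h0, hpos, hwin⟩ := h
  simp only [cut, Fin.val_zero, Nat.cast_zero, zero_add] at h0 hpos hwin
  refine ⟨fun i hi => ?_, fun j hj => ?_⟩
  · have := hpos ⟨n - k + i, by omega⟩ (by simp)
    have e := hG ((p : ℤ) - k - 1 + i)
    rw [show (p : ℤ) - k - 1 + i + (n + 1) = ((n - k + i : ℕ) : ℤ) + p by
      push_cast [hk]; ring] at e
    linarith
  by_contra! hlt
  obtain ⟨j', hj', hlo, hhi⟩ := hG.exists_mem_runStarts_Ico hj (x := p - k) (by linarith)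
  rcases le_or_gt j' p with hp | hp
  · have := hj' (p - j').toNat (by omega)
    rw [Int.toNat_of_nonneg (by linarith), add_sub_cancel] at this
    linarith
  · refine hwin ⟨(j' - p).toNat, by omega, fun i hi1 hi2 => ?_⟩
    have := hj' (i - (j' - p).toNat) (by omega)
    rw [show j' + ((i - (j' - p).toNat : ℕ) : ℤ) = i + p by omega] at this
    linarith

theorem isSkeletalZ_cut_of_isGreatest_runStarts (hG : QuasiPeriodic G (n + 1) c)
    (hstep : ∀ j, G (j + 1) ≤ G j + m) {p : Fin (n + 1)} {v : ℤ}
    (h : IsGreatest (runStarts G k (v + c)) (p - k - 1)) : IsSkeletalZ c m k (cut G p v) := by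
  obtain ⟨hmem, hmax⟩ := h
  refine ⟨isAreaVec_cut hstep p v, ?_, fun i hi => ?_, ?_⟩
  · simp only [cut, Fin.val_zero, Nat.cast_zero, zero_add]
    by_contra! hp
    have : (p : ℤ) - k ∈ runStarts G k (v + c) := fun i hi => by
      rcases hi.lt_or_eq with hi | rfl
      · simpa [show (p : ℤ) - k - 1 + (i + 1 : ℕ) = p - k + i by push_cast; ring] using
          hmem (i + 1) hi
      · rw [sub_add_cancel]; linarith
    linarith [hmax this]
  · have e := hG ((p : ℤ) - k - 1 + (i + k - n : ℕ))
    rw [show (p : ℤ) - k - 1 + ((i + k - n : ℕ) : ℤ) + (n + 1) = i + p by omega] at e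
    have := hmem (i + k - n) (by omega)
    simp only [cut]
    linarith
  · rintro ⟨s, hs, hall⟩
    have : (p : ℤ) + s ∈ runStarts G k (v + c) := fun i hi => by
      have := hall ⟨s + i, by omega⟩ (by simp) (by simp [hi])
      simp only [cut] at this
      push_cast at this
      rw [show (p : ℤ) + s + i = s + i + p by ring]
      linarith
    linarith [hmax this]

theorem isSkeletalZ_cut_iff (hk : k ≤ n) (hG : QuasiPeriodic G (n + 1) c)
    (hstep : ∀ j, G (j + 1) ≤ G j + m) (p : Fin (n + 1)) (v : ℤ) :
    IsSkeletalZ c m k (cut G p v) ↔ IsGreatest (runStarts G k (v + c)) (p - k - 1) :=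
  ⟨isGreatest_runStarts_of_isSkeletalZ_cut hk hG,
    isSkeletalZ_cut_of_isGreatest_runStarts hG hstep⟩

end skeletal

theorem ncard_setOf_isSkeletalZ_cut {G : ℤ → ℤ} {c m k : ℕ} (hc : 0 < c) (hk : k ≤ n)
    (hG : QuasiPeriodic G (n + 1) c) (hstep : ∀ j, G (j + 1) ≤ G j + m) :
    {q : Fin (n + 1) × ℤ | IsSkeletalZ c m k (cut G q.1 q.2)}.ncard = c := by
  set f := fun v => sSup (runStarts G k (v + c)) + k + 1
  have hR := hG.isGreatest_sSup_runStarts (k := k) hc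
  have hf : QuasiPeriodic f c (n + 1) := fun v => by
    have : IsGreatest (runStarts G k (v + c + c)) (sSup (runStarts G k (v + c)) - (n + 1)) :=
      ⟨by rw [← hG.mem_runStarts_add_iff, sub_add_cancel]; exact (hR _).1,
        fun j hj => by linarith [(hR _).2 ((hG.mem_runStarts_add_iff _ j).2 hj)]⟩
    simp only [f, (hR _).unique this]
    ring
  suffices {q : Fin (n + 1) × ℤ | IsSkeletalZ c m k (cut G q.1 q.2)} =
      {q | (q.1 : ℤ) = f q.2} by rw [this, ncard_setOf_eq_of_quasiPeriodic hc hf]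
  ext ⟨p, v⟩
  refine (isSkeletalZ_cut_iff hk hG hstep p v).trans ⟨fun h => ?_, fun h => ?_⟩
  · simp only [Set.mem_ofPred_eq, f, ← h.unique (hR _)]
    ring
  · convert hR (v + c)
    simp only [Set.mem_ofPred_eq, f] at h
    linarith

-- Undoing the cut at `(p, v)` is a shift by `-p`; for `p ≠ 0` that is the shift by `n + 1 - p`
-- followed by one period back, which raises all values by `c`.
def dual (c : ℕ) (q : Fin (n + 1) × ℤ) : Fin (n + 1) × ℤ :=
  (-q.1, if q.1 = 0 then -q.2 else -q.2 - c)

theorem dual_dual (c : ℕ) (q : Fin (n + 1) × ℤ) : dual c (dual c q) = q := by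
  obtain ⟨p, v⟩ := q
  by_cases hp : p = 0 <;> simp [dual, hp]

theorem cut_extend_cut_extend (c : ℕ) (g : Fin (n + 1) → ℤ) (q : Fin (n + 1) × ℤ) :
    cut (extend c (cut (extend c g) q.1 q.2)) (dual c q).1 (dual c q).2 = g := by
  obtain ⟨p, v⟩ := q
  funext i
  simp only [cut, dual, extend_cut (quasiPeriodic_extend c g), Fin.val_neg]
  by_cases hp : p = 0
  · simp [hp, extend_coe]
  · have := quasiPeriodic_extend c g i
    simp only [hp, if_false, extend_coe] at this ⊢
    rw [Nat.cast_sub p.2.le]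
    push_cast
    rw [show (i : ℤ) + (n + 1 - p) + p = i + (n + 1) by ring, this]
    ring

def swapCut (c : ℕ) (x : (Fin (n + 1) → ℤ) × (Fin (n + 1) × ℤ)) :
    (Fin (n + 1) → ℤ) × (Fin (n + 1) × ℤ) :=
  (cut (extend c x.1) x.2.1 x.2.2, dual c x.2)

theorem involutive_swapCut (c : ℕ) : Function.Involutive (swapCut (n := n) c) := fun x =>
  Prod.ext (cut_extend_cut_extend c x.1 x.2) (dual_dual c x.2)

def cutPairs (c : ℕ) (P Q : Set (Fin (n + 1) → ℤ)) :
    Set ((Fin (n + 1) → ℤ) × (Fin (n + 1) × ℤ)) :=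
  {x | x.1 ∈ P ∧ cut (extend c x.1) x.2.1 x.2.2 ∈ Q}

theorem ncard_cutPairs_comm (c : ℕ) (P Q : Set (Fin (n + 1) → ℤ)) :
    (cutPairs c P Q).ncard = (cutPairs c Q P).ncard := by
  have h : swapCut c ⁻¹' cutPairs c P Q = cutPairs c Q P := by
    ext ⟨g, q⟩
    simp only [cutPairs, Set.mem_preimage, Set.mem_ofPred_eq, swapCut, cut_extend_cut_extend]
    exact and_comm
  rw [← h, Set.ncard_preimage_of_injective_subset_range (involutive_swapCut c).injective
    fun x _ => (involutive_swapCut c).surjective x]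

theorem ncard_setOf_isSkeletalZ_mul {c m k : ℕ} (hc : 0 < c) (hk : k ≤ n) :
    {g : Fin (n + 1) → ℤ | IsSkeletalZ c m k g}.ncard * ((m + 1) * (n + 1) + c) =
      c * ((m + 1) * (n + 1) + c).choose (n + 1) := by
  let Sk := {g : Fin (n + 1) → ℤ | IsSkeletalZ c m k g}
  let Ad := {g : Fin (n + 1) → ℤ | Admissible c m g}
  have hAd : Ad.Finite := Set.finite_of_ncard_pos <| by
    rw [ncard_setOf_admissible]
    exact Nat.choose_pos (by nlinarith)
  have hSk : Sk.Finite := hAd.subset fun g hg => IsSkeletalZ.admissible hg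
  calc Sk.ncard * ((m + 1) * (n + 1) + c) = (cutPairs c Sk Ad).ncard :=
        (ncard_setOf_mem_fiber_of_ncard_eq hSk (by positivity) fun g hg =>
          ncard_setOf_admissible_cut (quasiPeriodic_extend c g)
            (IsSkeletalZ.admissible hg).extend_step).symm
    _ = (cutPairs c Ad Sk).ncard := ncard_cutPairs_comm c Sk Ad
    _ = Ad.ncard * c :=
        ncard_setOf_mem_fiber_of_ncard_eq hAd hc fun g (hg : Admissible c m g) =>
          ncard_setOf_isSkeletalZ_cut hc hk (quasiPeriodic_extend c g) hg.extend_step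
    _ = c * ((m + 1) * (n + 1) + c).choose (n + 1) := by rw [ncard_setOf_admissible, mul_comm]

end SkeletalCount

theorem stmt9_general (n : ℕ) (c m : ℕ) (hc : 0 < c) (k : ℕ) (hk : k ≤ n) :
    {g : Fin (n + 1) → ℤ | IsSkeletalZ (c : ℤ) (m : ℤ) k g}.ncard *
        ((m + 1) * (n + 1) + c)
      = c * Nat.choose ((m + 1) * (n + 1) + c) (n + 1) :=
  SkeletalCount.ncard_setOf_isSkeletalZ_mul hc hk

/-- for `𝒢 = ℤ` and positive integers `c, m`, the number of
`k`-skeletal area vectors equals the `m`-ballot number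
`c/((m+1)N + c)·binom((m+1)N + c, N)` (here `N = n+1`, stated multiplied out). -/
theorem stmt9 (n : ℕ) (c m : ℕ) (hc : 0 < c) (hm : 0 < m) (k : ℕ) (hk : k ≤ n) :
    {g : Fin (n + 1) → ℤ | IsSkeletalZ (c : ℤ) (m : ℤ) k g}.ncard *
        ((m + 1) * (n + 1) + c)
      = c * Nat.choose ((m + 1) * (n + 1) + c) (n + 1) :=
  stmt9_general n c m hc k hk
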